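/- In the FLAG setting, for every u ∈ C: F(y_{T+1}) − F(u) ≤ L·D/T² + D·(Σ_{i=1}^d s_T(i) + δ·d)/(2·Σ_{k=1}^T η_k). -/

import Mathlib

/-!
Write `r_k = η_1 + ⋯ + η_k`. The step-size recursion makes `η_k` the positive root of
`L_k η² - η = η_{k-1}² L_{k-1}`, so by induction `η_k² L_k = r_k`. Multiplied by `η_k`, the
binary-search guarantee therefore trades `⟨p_k, x_k - z_k⟩` against the prox-step decrease
`F(y_k) - F(y_{k+1})` with weight `r_{k-1}`. The prox step and the `S_k`-weighted mirror step both
minimise a convex function plus a quadratic form, so the three-point lemma applies to each; with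
the descent lemma and Young's inequality (whose error `r_k ‖p_k‖² / (2L)` is exactly what the prox
steps pay back), the potential `r_k (F(y_{k+1}) - F(u))` grows per step by at most
`½‖u - z_k‖²_{S_k} - ½‖u - z_{k+1}‖²_{S_k} + D L r_k / T³`. The AdaGrad weights `s_k` only grow
and every coordinate gap is at most `√D`, so these differences telescope to at most
`D · tr(S_T) / 2`; dividing by `r_T` gives the bound.
-/

open scoped RealInnerProductSpace
open AffineMap Finset Filter Topology

section ConvexMinimizer

variable {E : Type*} [AddCommGroup E] [Module ℝ E]

lemma QuadraticMap.map_lineMap (Q : QuadraticMap ℝ E ℝ) (u v : E) (t : ℝ) :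
    Q (lineMap u v t) = (1 - t) * Q u + t * Q v - t * (1 - t) * Q (u - v) := by
  have hpol : ∀ a b : E, Q (a + b) = Q a + Q b + QuadraticMap.polar Q a b := fun a b => by
    rw [QuadraticMap.polar]; ring
  rw [lineMap_apply_module, hpol, sub_eq_add_neg u v, hpol, Q.map_smul, Q.map_smul, Q.map_neg,
    QuadraticMap.polar_smul_left, QuadraticMap.polar_smul_right, QuadraticMap.polar_neg_right]
  simp only [smul_eq_mul]; ring

lemma Convex.add_le_of_isMinOn_of_forall_lineMap_le {C : Set E} (hC : Convex ℝ C) {φ : E → ℝ}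
    {z w : E} {q : ℝ} (hz : z ∈ C) (hw : w ∈ C) (hmin : IsMinOn φ C z)
    (hseg : ∀ t ∈ Set.Ioo (0 : ℝ) 1,
      φ (lineMap z w t) ≤ (1 - t) * φ z + t * φ w - t * (1 - t) * q) :
    φ z + q ≤ φ w := by
  have hshort : ∀ t ∈ Set.Ioo (0 : ℝ) 1, φ z + (1 - t) * q ≤ φ w := fun t ht => by
    have hzt := isMinOn_iff.mp hmin _ (hC.lineMap_mem hz hw ⟨ht.1.le, ht.2.le⟩)
    have := hseg t ht
    nlinarith [ht.1]
  have hlim : Tendsto (fun t : ℝ => φ z + (1 - t) * q) (𝓝[>] 0) (𝓝 (φ z + q)) := by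
    have hcont : Continuous fun t : ℝ => φ z + (1 - t) * q := by fun_prop
    simpa using (hcont.tendsto 0).mono_left nhdsWithin_le_nhds
  exact le_of_tendsto hlim (eventually_of_mem (Ioo_mem_nhdsGT zero_lt_one) hshort)

lemma ConvexOn.three_point_of_isMinOn {C : Set E} {ψ : E → ℝ} (hψ : ConvexOn ℝ C ψ)
    (Q : QuadraticMap ℝ E ℝ) {a z w : E} (hz : z ∈ C) (hw : w ∈ C)
    (hmin : IsMinOn (fun v => ψ v + Q (v - a)) C z) :
    ψ z + Q (z - a) + Q (z - w) ≤ ψ w + Q (w - a) :=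
  hψ.1.add_le_of_isMinOn_of_forall_lineMap_le hz hw hmin fun t ht => by
    have hψt := hψ.2 hz hw (sub_nonneg.2 ht.2.le) ht.1.le (sub_add_cancel 1 t)
    have hshift : lineMap z w t - a = lineMap (z - a) (w - a) t := by
      simp only [lineMap_apply_module]; module
    rw [← lineMap_apply_module, smul_eq_mul, smul_eq_mul] at hψt
    rw [hshift, Q.map_lineMap, sub_sub_sub_cancel_right]
    nlinarith

end ConvexMinimizer

section InnerProductSpace

variable {E : Type*} [NormedAddCommGroup E] [InnerProductSpace ℝ E] {C : Set E}

lemma convexOn_inner_sub (hC : Convex ℝ C) (g x : E) : ConvexOn ℝ C fun v => ⟪g, v - x⟫ := by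
  have hfun : (fun v => ⟪g, v - x⟫) = ⇑(innerₗ E g) - fun _ : E => ⟪g, x⟫ := by
    ext v; simp [inner_sub_right]
  rw [hfun]
  exact ((innerₗ E g).convexOn hC).sub (concaveOn_const _ hC)

variable [CompleteSpace E] {f h : E → ℝ} {f' : E → E}

lemma HasGradientAt.hasDerivAt_comp_lineMap {g a b : E} {t : ℝ}
    (hf : HasGradientAt f g (lineMap a b t)) :
    HasDerivAt (fun s : ℝ => f (lineMap a b s)) ⟪g, b - a⟫ t := by
  have := hf.hasFDerivAt.comp_hasDerivAt t (hasDerivAt_lineMap (a := a) (b := b) (x := t))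
  simp only [InnerProductSpace.toDual_apply_apply] at this
  exact this

lemma ConvexOn.add_inner_le_of_hasGradientAt (hf : ConvexOn ℝ C f) {g a b : E} (ha : a ∈ C)
    (hb : b ∈ C) (hg : HasGradientAt f g a) :
    f a + ⟪g, b - a⟫ ≤ f b := by
  have hslope := (hf.comp_affineMap (lineMap a b)).le_slope_of_hasDerivAt
    (x := 0) (y := 1) (by simpa using ha) (by simpa using hb) zero_lt_one
    (HasGradientAt.hasDerivAt_comp_lineMap (by simpa using hg))
  rw [slope_def_field, Function.comp_apply, Function.comp_apply, lineMap_apply_zero,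
    lineMap_apply_one, sub_zero, div_one] at hslope
  linarith

lemma Convex.le_add_inner_add_of_lipschitz_gradient (hC : Convex ℝ C) {L : ℝ}
    (hf : ∀ v ∈ C, HasGradientAt f (f' v) v)
    (hf' : ∀ a ∈ C, ∀ b ∈ C, ‖f' a - f' b‖ ≤ L * ‖a - b‖) {a b : E} (ha : a ∈ C) (hb : b ∈ C) :
    f b ≤ f a + ⟪f' a, b - a⟫ + L / 2 * ‖b - a‖ ^ 2 := by
  set w := b - a
  have hseg : ∀ t ∈ Set.Icc (0 : ℝ) 1, lineMap a b t ∈ C := fun t ht => hC.lineMap_mem ha hb ht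
  set ψ : ℝ → ℝ := fun t => f (lineMap a b t) - L / 2 * t ^ 2 * ‖w‖ ^ 2
  have hψ : ∀ t ∈ Set.Icc (0 : ℝ) 1,
      HasDerivAt ψ (⟪f' (lineMap a b t), w⟫ - L * t * ‖w‖ ^ 2) t := fun t ht => by
    refine ((hf _ (hseg t ht)).hasDerivAt_comp_lineMap.sub
      (((hasDerivAt_pow 2 t).const_mul (L / 2)).mul_const (‖w‖ ^ 2))).congr_deriv ?_
    push_cast; ring
  have hderiv : ∀ t ∈ Set.Icc (0 : ℝ) 1, ⟪f' (lineMap a b t), w⟫ - L * t * ‖w‖ ^ 2 ≤ ⟪f' a, w⟫ :=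
    fun t ht => by
    have hdist : ‖lineMap a b t - a‖ = t * ‖w‖ := by
      rw [lineMap_apply_module', add_sub_cancel_right, norm_smul, Real.norm_of_nonneg ht.1]
    calc ⟪f' (lineMap a b t), w⟫ - L * t * ‖w‖ ^ 2
        = ⟪f' (lineMap a b t) - f' a, w⟫ + ⟪f' a, w⟫ - L * t * ‖w‖ ^ 2 := by
          rw [inner_sub_left]; ring
      _ ≤ L * (t * ‖w‖) * ‖w‖ + ⟪f' a, w⟫ - L * t * ‖w‖ ^ 2 := by
          gcongr
          refine (real_inner_le_norm _ _).trans (mul_le_mul_of_nonneg_right ?_ (norm_nonneg w))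
          rw [← hdist]; exact hf' _ (hseg t ht) _ ha
      _ = ⟪f' a, w⟫ := by ring
  have hmvt := (convex_Icc (0 : ℝ) 1).image_sub_le_mul_sub_of_deriv_le
    (fun t ht => (hψ t ht).continuousAt.continuousWithinAt)
    (fun t ht => (hψ t (interior_subset ht)).differentiableAt.differentiableWithinAt)
    (fun t ht => (hψ t (interior_subset ht)).deriv ▸ hderiv t (interior_subset ht))
    0 (Set.left_mem_Icc.2 zero_le_one) 1 (Set.right_mem_Icc.2 zero_le_one) zero_le_one
  simp only [ψ, lineMap_apply_zero, lineMap_apply_one] at hmvt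
  linarith

lemma ConvexOn.add_le_of_prox {L : ℝ} (hL : 0 < L) (hC : Convex ℝ C)
    (hfconv : ConvexOn ℝ C f) (hhconv : ConvexOn ℝ C h)
    (hf : ∀ v ∈ C, HasGradientAt f (f' v) v)
    (hf' : ∀ a ∈ C, ∀ b ∈ C, ‖f' a - f' b‖ ≤ L * ‖a - b‖)
    {x y w : E} (hx : x ∈ C) (hy : y ∈ C) (hw : w ∈ C)
    (hmin : ∀ v ∈ C, h y + ⟪f' x, y - x⟫ + L / 2 * ‖y - x‖ ^ 2
      ≤ h v + ⟪f' x, v - x⟫ + L / 2 * ‖v - x‖ ^ 2) :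
    f y + h y ≤ f w + h w + ⟪-L • (y - x), x - w⟫ - ‖-L • (y - x)‖ ^ 2 / (2 * L) := by
  set Q : QuadraticMap ℝ E ℝ := (L / 2) • LinearMap.BilinMap.toQuadraticMap (innerₗ E)
  have hQ : ∀ v, Q v = L / 2 * ‖v‖ ^ 2 := fun v => by simp [Q]
  have hψ : ConvexOn ℝ C fun v => h v + ⟪f' x, v - x⟫ := hhconv.add (convexOn_inner_sub hC _ _)
  have hthree := hψ.three_point_of_isMinOn Q hy hw
    (isMinOn_iff.2 fun v hv => by simpa only [hQ] using hmin v hv)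
  have hdesc := hC.le_add_inner_add_of_lipschitz_gradient hf hf' hx hy
  have hgrad := hfconv.add_inner_le_of_hasGradientAt hx hw (hf x hx)
  have hid : ⟪-L • (y - x), x - w⟫ - ‖-L • (y - x)‖ ^ 2 / (2 * L)
      = L / 2 * ‖w - x‖ ^ 2 - L / 2 * ‖y - w‖ ^ 2 := by
    rw [show y - w = (y - x) + (x - w) by abel, show w - x = -(x - w) by abel, norm_neg,
      norm_add_sq_real, real_inner_smul_left, norm_smul, mul_pow, Real.norm_eq_abs, sq_abs]
    field_simp
    ring
  simp only [hQ] at hthree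
  linarith

end InnerProductSpace

section WeightedNorm

variable {ι : Type*} [Fintype ι] {C : Set (EuclideanSpace ℝ ι)}

lemma mul_le_half_mul_sq_add_half_sq_div {c : ℝ} (hc : 0 < c) (q v : ℝ) :
    q * v ≤ 1 / 2 * (c * v ^ 2) + 1 / 2 * (q ^ 2 / c) := by
  have hsq : 1 / 2 * (c * v ^ 2) + 1 / 2 * (q ^ 2 / c) - q * v = (c * v - q) ^ 2 / (2 * c) := by
    field_simp; ring
  nlinarith [div_nonneg (sq_nonneg (c * v - q)) (by positivity : (0 : ℝ) ≤ 2 * c)]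

lemma Convex.inner_sub_le_of_weighted_prox (hC : Convex ℝ C) {c : ι → ℝ} (hc : ∀ i, 0 < c i)
    {q a z u : EuclideanSpace ℝ ι} (hz : z ∈ C) (hu : u ∈ C)
    (hmin : ∀ w ∈ C, ⟪q, z - a⟫ + 1 / 2 * ∑ i, c i * (z i - a i) ^ 2
      ≤ ⟪q, w - a⟫ + 1 / 2 * ∑ i, c i * (w i - a i) ^ 2) :
    ⟪q, a - u⟫ ≤ 1 / 2 * ∑ i, c i * (u i - a i) ^ 2 - 1 / 2 * ∑ i, c i * (u i - z i) ^ 2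
      + 1 / 2 * ∑ i, q i ^ 2 / c i := by
  set Q : QuadraticMap ℝ (EuclideanSpace ℝ ι) ℝ :=
    (1 / 2 : ℝ) • (QuadraticMap.weightedSumSquares ℝ c).comp
      (EuclideanSpace.equiv ι ℝ : EuclideanSpace ℝ ι →ₗ[ℝ] ι → ℝ)
  have hQ : ∀ v, Q v = 1 / 2 * ∑ i, c i * v i ^ 2 := fun v => by
    simp [Q, QuadraticMap.weightedSumSquares_apply, sq]
  have hthree := (convexOn_inner_sub hC q a).three_point_of_isMinOn Q hz hu
    (isMinOn_iff.2 fun w hw => by simpa only [hQ, PiLp.sub_apply] using hmin w hw)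
  have hyoung : ⟪q, a - z⟫ ≤ Q (z - a) + 1 / 2 * ∑ i, q i ^ 2 / c i := by
    simp only [hQ, PiLp.inner_apply, PiLp.sub_apply, RCLike.inner_apply, conj_trivial,
      Finset.mul_sum, ← Finset.sum_add_distrib]
    gcongr with i
    rw [sub_sq_comm, mul_comm]
    exact mul_le_half_mul_sq_add_half_sq_div (hc i) (q i) (a i - z i)
  rw [Q.map_sub z u] at hthree
  simp only [hQ, PiLp.sub_apply, inner_sub_right] at hthree hyoung ⊢
  linarith

lemma sum_sq_div_pos {c : ι → ℝ} (hc : ∀ i, 0 < c i) {g : EuclideanSpace ℝ ι} (hg : g ≠ 0) :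
    0 < ∑ i, g i ^ 2 / c i := by
  obtain ⟨i, hi⟩ : ∃ i, g i ≠ 0 := by
    by_contra! h0
    exact hg (by ext i; exact h0 i)
  exact sum_pos' (fun j _ => div_nonneg (sq_nonneg _) (hc j).le)
    ⟨i, mem_univ i, div_pos (by positivity) (hc i)⟩

lemma sum_Icc_weighted_sq_sub_le {T : ℕ} (hT : 1 ≤ T)
    {c v : ℕ → ι → ℝ} {D : ℝ} (hc : ∀ k, 1 ≤ k → k ≤ T → ∀ i, 0 ≤ c k i)
    (hmono : ∀ k, 1 ≤ k → k < T → ∀ i, c k i ≤ c (k + 1) i)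
    (hv : ∀ k, 1 ≤ k → k ≤ T → ∀ i, v k i ^ 2 ≤ D) :
    ∑ k ∈ Icc 1 T, (∑ i, c k i * v k i ^ 2 - ∑ i, c k i * v (k + 1) i ^ 2)
      ≤ D * ∑ i, c T i := by
  suffices key : ∀ n, 1 ≤ n → n ≤ T →
      ∑ k ∈ Icc 1 n, (∑ i, c k i * v k i ^ 2 - ∑ i, c k i * v (k + 1) i ^ 2)
        + ∑ i, c n i * v (n + 1) i ^ 2 ≤ D * ∑ i, c n i by
    have hlast : 0 ≤ ∑ i, c T i * v (T + 1) i ^ 2 :=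
      sum_nonneg fun i _ => mul_nonneg (hc T hT le_rfl i) (sq_nonneg _)
    linarith [key T hT le_rfl]
  intro n hn
  induction n, hn using Nat.le_induction with
  | base =>
    intro h1T
    rw [Icc_self, sum_singleton, sub_add_cancel, mul_sum]
    exact sum_le_sum fun i _ => by
      rw [mul_comm D]; exact mul_le_mul_of_nonneg_left (hv 1 le_rfl h1T i) (hc 1 le_rfl h1T i)
  | succ n hn ih =>
    intro hnT
    have hgrow : ∑ i, c (n + 1) i * v (n + 1) i ^ 2 - ∑ i, c n i * v (n + 1) i ^ 2
        ≤ D * ∑ i, c (n + 1) i - D * ∑ i, c n i := by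
      rw [← sum_sub_distrib, ← mul_sub, ← sum_sub_distrib, mul_sum]
      exact sum_le_sum fun i _ => by
        rw [← sub_mul, mul_comm D]
        exact mul_le_mul_of_nonneg_left (hv (n + 1) (by omega) hnT i)
          (sub_nonneg.2 (hmono n hn hnT i))
    rw [sum_Icc_succ_top (by omega)]
    linarith [ih (by omega)]

end WeightedNorm

section StepSize

lemma sq_mul_sub_eq_of_eq_add_sqrt {ℓ c e : ℝ} (hℓ : 0 < ℓ) (hc : 0 ≤ c)
    (he : e = 1 / (2 * ℓ) + √(1 / (4 * ℓ ^ 2) + c / ℓ)) :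
    e ^ 2 * ℓ - e = c := by
  have hsq := Real.sq_sqrt (by positivity : 0 ≤ 1 / (4 * ℓ ^ 2) + c / ℓ)
  rw [show √(1 / (4 * ℓ ^ 2) + c / ℓ) = e - 1 / (2 * ℓ) by rw [he]; ring] at hsq
  field_simp at hsq
  have hfactor : (e ^ 2 * ℓ - e - c) * (16 * ℓ) = 0 := by linear_combination hsq
  exact sub_eq_zero.1 ((mul_eq_zero.1 hfactor).resolve_right (by positivity))

variable {T : ℕ} {ℓ η : ℕ → ℝ}

lemma stepSize_pos (hℓ : ∀ k, 1 ≤ k → k ≤ T → 0 < ℓ k) (hη1 : η 1 = 1 / ℓ 1)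
    (hηk : ∀ k, 2 ≤ k → k ≤ T →
      η k = 1 / (2 * ℓ k) + √(1 / (4 * ℓ k ^ 2) + η (k - 1) ^ 2 * ℓ (k - 1) / ℓ k))
    {k : ℕ} (hk1 : 1 ≤ k) (hkT : k ≤ T) : 0 < η k := by
  have hℓk := hℓ k hk1 hkT
  rcases hk1.eq_or_lt with rfl | hk2
  · rw [hη1]; positivity
  · rw [hηk k hk2 hkT]; positivity

lemma stepSize_sq_mul_eq_sum (hℓ : ∀ k, 1 ≤ k → k ≤ T → 0 < ℓ k) (hη1 : η 1 = 1 / ℓ 1)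
    (hηk : ∀ k, 2 ≤ k → k ≤ T →
      η k = 1 / (2 * ℓ k) + √(1 / (4 * ℓ k ^ 2) + η (k - 1) ^ 2 * ℓ (k - 1) / ℓ k))
    {k : ℕ} (hk1 : 1 ≤ k) (hkT : k ≤ T) : η k ^ 2 * ℓ k = ∑ j ∈ Icc 1 k, η j := by
  induction k, hk1 using Nat.le_induction with
  | base => rw [Icc_self, sum_singleton, hη1]; field_simp [(hℓ 1 le_rfl hkT).ne']
  | succ k hk ih =>
    have hrec := sq_mul_sub_eq_of_eq_add_sqrt (hℓ (k + 1) (by omega) hkT)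
      (by have := hℓ k hk (by omega); positivity) (hηk (k + 1) (by omega) hkT)
    rw [Nat.add_sub_cancel] at hrec
    rw [sum_Icc_succ_top (by omega), ← ih (by omega)]
    linarith

end StepSize

lemma sum_Icc_mul_le_sum_of_step {T : ℕ} {η a b : ℕ → ℝ}
    (hstep : ∀ k, 1 ≤ k → k ≤ T →
      (∑ j ∈ Icc 1 k, η j) * a (k + 1) ≤ (∑ j ∈ Icc 1 k, η j - η k) * a k + b k) :
    (∑ j ∈ Icc 1 T, η j) * a (T + 1) ≤ ∑ k ∈ Icc 1 T, b k := by
  induction T with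
  | zero => simp
  | succ n ih =>
    have hlast := hstep (n + 1) (by omega) le_rfl
    rw [sum_Icc_succ_top (by omega), add_sub_cancel_right] at hlast
    rw [sum_Icc_succ_top (by omega), sum_Icc_succ_top (by omega)]
    linarith [ih fun k h1 h2 => hstep k h1 (by omega)]

lemma le_of_potential_step {ι : Type*} [Fintype ι] {T : ℕ} (hT : 1 ≤ T) {η a : ℕ → ℝ}
    {c v : ℕ → ι → ℝ} {D e : ℝ} (hη : ∀ k, 1 ≤ k → k ≤ T → 0 < η k) (he : 0 ≤ e)
    (hc : ∀ k, 1 ≤ k → k ≤ T → ∀ i, 0 ≤ c k i)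
    (hmono : ∀ k, 1 ≤ k → k < T → ∀ i, c k i ≤ c (k + 1) i)
    (hv : ∀ k, 1 ≤ k → k ≤ T → ∀ i, v k i ^ 2 ≤ D)
    (hstep : ∀ k, 1 ≤ k → k ≤ T →
      (∑ j ∈ Icc 1 k, η j) * a (k + 1) ≤ (∑ j ∈ Icc 1 k, η j - η k) * a k
        + ((∑ i, c k i * v k i ^ 2 - ∑ i, c k i * v (k + 1) i ^ 2) / 2
          + e * ∑ j ∈ Icc 1 k, η j)) :
    a (T + 1) ≤ e * T + D * (∑ i, c T i) / (2 * ∑ j ∈ Icc 1 T, η j) := by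
  have hpot := sum_Icc_mul_le_sum_of_step hstep
  rw [sum_add_distrib, ← sum_div, ← mul_sum] at hpot
  have htel := sum_Icc_weighted_sq_sub_le hT hc hmono hv
  have hpartial : ∑ k ∈ Icc 1 T, ∑ j ∈ Icc 1 k, η j ≤ T * ∑ j ∈ Icc 1 T, η j := by
    simpa using sum_le_card_nsmul (Icc 1 T) _ _ fun k hk =>
      sum_le_sum_of_subset_of_nonneg (Icc_subset_Icc_right (mem_Icc.1 hk).2) fun j hj _ =>
        (hη j (mem_Icc.1 hj).1 (mem_Icc.1 hj).2).le
  have hR : 0 < ∑ j ∈ Icc 1 T, η j :=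
    sum_pos (fun j hj => hη j (mem_Icc.1 hj).1 (mem_Icc.1 hj).2) ⟨1, mem_Icc.2 ⟨le_rfl, hT⟩⟩
  rw [add_div' _ _ _ (by positivity), le_div_iff₀ (by positivity)]
  nlinarith [mul_le_mul_of_nonneg_left hpartial he]

lemma flag_step_le {ι : Type*} [Fintype ι] {C : Set (EuclideanSpace ℝ ι)} (hC : Convex ℝ C)
    {f h F : EuclideanSpace ℝ ι → ℝ} {f' : EuclideanSpace ℝ ι → EuclideanSpace ℝ ι} {L : ℝ}
    (hL : 0 < L) (hfconv : ConvexOn ℝ C f) (hhconv : ConvexOn ℝ C h)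
    (hf : ∀ v ∈ C, HasGradientAt f (f' v) v)
    (hf' : ∀ a ∈ C, ∀ b ∈ C, ‖f' a - f' b‖ ≤ L * ‖a - b‖) (hF : ∀ v, F v = f v + h v)
    {c : ι → ℝ} (hc : ∀ i, 0 < c i) {x y y' z z' p g u : EuclideanSpace ℝ ι} {η ℓ r e : ℝ}
    (hx : x ∈ C) (hy : y ∈ C) (hu : u ∈ C) (hη : 0 < η) (hηr : η ≤ r) (hr : η ^ 2 * ℓ = r)
    (hprox : y' ∈ C ∧ ∀ w ∈ C, h y' + ⟪f' x, y' - x⟫ + L / 2 * ‖y' - x‖ ^ 2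
      ≤ h w + ⟪f' x, w - x⟫ + L / 2 * ‖w - x‖ ^ 2)
    (hp : p = -L • (y' - x)) (hg : g = ‖p‖⁻¹ • p) (hℓ : ℓ = L * ∑ i, g i ^ 2 / c i)
    (hmirror : z' ∈ C ∧ ∀ w ∈ C, ⟪η • p, z' - z⟫ + 1 / 2 * ∑ i, c i * (z' i - z i) ^ 2
      ≤ ⟪η • p, w - z⟫ + 1 / 2 * ∑ i, c i * (w i - z i) ^ 2)
    (hbs : ⟪p, x - z⟫ ≤ (η * ℓ - 1) * ⟪p, y - x⟫ + e * (η * ℓ)) :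
    r * (F y' - F u) ≤ (r - η) * (F y - F u)
      + ((∑ i, c i * (u i - z i) ^ 2 - ∑ i, c i * (u i - z' i) ^ 2) / 2 + e * r) := by
  have hprox_at : ∀ w ∈ C, F y' ≤ F w + ⟪p, x - w⟫ - ‖p‖ ^ 2 / (2 * L) := fun w hw => by
    simpa only [hF, hp] using hfconv.add_le_of_prox hL hC hhconv hf hf' hx hprox.1 hw hprox.2
  have hmir := hC.inner_sub_le_of_weighted_prox hc hmirror.1 hu hmirror.2
  have hpg : ∀ i, p i = ‖p‖ * g i := fun i => by
    rcases eq_or_ne p 0 with rfl | hp0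
    · simp
    · simp [hg, hp0]
  have hsq : 1 / 2 * ∑ i, (η • p) i ^ 2 / c i = r * (‖p‖ ^ 2 / (2 * L)) := by
    simp only [← hr, hℓ, PiLp.smul_apply, smul_eq_mul, hpg, mul_pow, mul_div_assoc, ← mul_sum]
    field_simp
  rw [real_inner_smul_left, hsq] at hmir
  have hu' := hprox_at u hu
  have hy' := hprox_at y hy
  subst hr
  simp only [inner_sub_right] at hu' hy' hbs hmir ⊢
  linear_combination η * hu' + (η ^ 2 * ℓ - η) * hy' + η * hbs + hmir

theorem flag_corollary_two_general
    {d : ℕ} (T : ℕ) (hT : 1 ≤ T)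
    (C : Set (EuclideanSpace ℝ (Fin d)))
    (hCconv : Convex ℝ C)
    (D L δ : ℝ) (hL : 0 < L) (hδ : 0 < δ) (hD0 : 0 ≤ D)
    (hD : ∀ a ∈ C, ∀ b ∈ C, ∀ i : Fin d, (a i - b i) ^ 2 ≤ D)
    (f h : EuclideanSpace ℝ (Fin d) → ℝ)
    (f' : EuclideanSpace ℝ (Fin d) → EuclideanSpace ℝ (Fin d))
    (hfconv : ConvexOn ℝ Set.univ f) (hhconv : ConvexOn ℝ Set.univ h)
    (hfdiff : ∀ v, HasGradientAt f (f' v) v)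
    (hflip : ∀ a ∈ C, ∀ b ∈ C, ‖f' a - f' b‖ ≤ L * ‖a - b‖)
    (F : EuclideanSpace ℝ (Fin d) → ℝ) (hF : ∀ v, F v = f v + h v)
    (x y z p g : ℕ → EuclideanSpace ℝ (Fin d))
    (s : ℕ → Fin d → ℝ) (Lk η : ℕ → ℝ)
    (hinit : x 1 = y 1 ∧ y 1 = z 1)
    (hxC : ∀ k, 1 ≤ k → k ≤ T → x k ∈ C)
    -- `y (k+1) = prox (x k)`: it is the minimizer over `C` of the prox objective at `x k`
    (hproxstep : ∀ k, 1 ≤ k → k ≤ T → y (k + 1) ∈ C ∧ ∀ w ∈ C,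
      h (y (k + 1)) + ⟪f' (x k), y (k + 1) - x k⟫ + L / 2 * ‖y (k + 1) - x k‖ ^ 2
        ≤ h w + ⟪f' (x k), w - x k⟫ + L / 2 * ‖w - x k‖ ^ 2)
    (hp : ∀ k, 1 ≤ k → k ≤ T → p k = -L • (y (k + 1) - x k))
    (hpne : ∀ k, 1 ≤ k → k ≤ T → p k ≠ 0)
    (hg : ∀ k, 1 ≤ k → k ≤ T → g k = ‖p k‖⁻¹ • p k)
    (hs : ∀ k, 1 ≤ k → k ≤ T → ∀ i : Fin d,
      s k i = Real.sqrt (∑ j ∈ Finset.Icc 1 k, g j i ^ 2))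
    -- `L_k = L · g_kᵀ S_k⁻¹ g_k` with `S_k = diag(s_k) + δ I`
    (hLk : ∀ k, 1 ≤ k → k ≤ T → Lk k = L * ∑ i : Fin d, g k i ^ 2 / (s k i + δ))
    (hη1 : η 1 = 1 / Lk 1)
    (hηk : ∀ k, 2 ≤ k → k ≤ T →
      η k = 1 / (2 * Lk k)
        + Real.sqrt (1 / (4 * Lk k ^ 2) + η (k - 1) ^ 2 * Lk (k - 1) / Lk k))
    -- mirror-descent step: `z (k+1)` minimizes `⟨η_k p_k, z − z_k⟩ + ½‖z − z_k‖²_{S_k}`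
    (hmirror : ∀ k, 1 ≤ k → k ≤ T → z (k + 1) ∈ C ∧ ∀ w ∈ C,
      ⟪η k • p k, z (k + 1) - z k⟫
          + 1 / 2 * ∑ i : Fin d, (s k i + δ) * (z (k + 1) i - z k i) ^ 2
        ≤ ⟪η k • p k, w - z k⟫
          + 1 / 2 * ∑ i : Fin d, (s k i + δ) * (w i - z k i) ^ 2)
    -- binary-search guarantee
    (hbs : ∀ k, 1 ≤ k → k ≤ T →
      ⟪p k, x k - z k⟫
        ≤ (η k * Lk k - 1) * ⟪p k, y k - x k⟫
          + D * L * (η k * Lk k) / (T : ℝ) ^ 3)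
    (u : EuclideanSpace ℝ (Fin d)) (hu : u ∈ C) :
    F (y (T + 1)) - F u
      ≤ L * D / (T : ℝ) ^ 2
        + D * ((∑ i : Fin d, s T i) + δ * d) / (2 * ∑ k ∈ Finset.Icc 1 T, η k) := by
  obtain ⟨hx1y, hy1z⟩ := hinit
  have hc : ∀ k, 1 ≤ k → k ≤ T → ∀ i, 0 < s k i + δ := fun k h1 h2 i => by
    rw [hs k h1 h2 i]; positivity
  have hLk_pos : ∀ k, 1 ≤ k → k ≤ T → 0 < Lk k := fun k h1 h2 => by
    have hgk : g k ≠ 0 := hg k h1 h2 ▸ smul_ne_zero (by simpa using hpne k h1 h2) (hpne k h1 h2)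
    exact hLk k h1 h2 ▸ mul_pos hL (sum_sq_div_pos (hc k h1 h2) hgk)
  have hη : ∀ k, 1 ≤ k → k ≤ T → 0 < η k := fun _ => stepSize_pos hLk_pos hη1 hηk
  have hyC : ∀ k, 1 ≤ k → k ≤ T → y k ∈ C
    | 1, _, _ => hx1y ▸ hxC 1 le_rfl hT
    | k + 2, _, h2 => (hproxstep (k + 1) (by omega) (by omega)).1
  have hzC : ∀ k, 1 ≤ k → k ≤ T → z k ∈ C
    | 1, _, _ => hy1z ▸ hx1y ▸ hxC 1 le_rfl hT
    | k + 2, _, h2 => (hmirror (k + 1) (by omega) (by omega)).1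
  have hη_le : ∀ k, 1 ≤ k → k ≤ T → η k ≤ ∑ j ∈ Icc 1 k, η j := fun k h1 h2 =>
    single_le_sum (fun j hj => (hη j (mem_Icc.1 hj).1 ((mem_Icc.1 hj).2.trans h2)).le)
      (mem_Icc.2 ⟨h1, le_rfl⟩)
  have hs_mono : ∀ k, 1 ≤ k → k < T → ∀ i, s k i + δ ≤ s (k + 1) i + δ := fun k h1 h2 i => by
    rw [hs k h1 h2.le i, hs (k + 1) (by omega) h2 i]
    gcongr ?_ + δ
    exact Real.sqrt_le_sqrt (sum_le_sum_of_subset_of_nonneg (Icc_subset_Icc_right (by omega))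
      fun _ _ _ => sq_nonneg _)
  have hrate := le_of_potential_step hT (a := fun k => F (y k) - F u) (c := fun k i => s k i + δ)
    (v := fun k i => u i - z k i) (e := D * L / T ^ 3) hη (by positivity)
    (fun k h1 h2 i => (hc k h1 h2 i).le) hs_mono (fun k h1 h2 i => hD u hu (z k) (hzC k h1 h2) i)
    fun k h1 h2 => flag_step_le hCconv hL (hfconv.subset (Set.subset_univ C) hCconv)
      (hhconv.subset (Set.subset_univ C) hCconv) (fun v _ => hfdiff v) hflip hF (hc k h1 h2)
      (hxC k h1 h2) (hyC k h1 h2) hu (hη k h1 h2) (hη_le k h1 h2)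
      (stepSize_sq_mul_eq_sum hLk_pos hη1 hηk h1 h2) (hproxstep k h1 h2) (hp k h1 h2)
      (hg k h1 h2) (hLk k h1 h2) (hmirror k h1 h2) ((hbs k h1 h2).trans_eq (by ring))
  have hT0 : (0 : ℝ) < T := by exact_mod_cast hT
  convert hrate using 2
  · field_simp
  · simp [sum_add_distrib, mul_comm]

/-- **Corollary 2** for FLAG:
`F(y_{T+1}) − F(u) ≤ LD/T² + D·trace(S_T)/(2 ∑_k η_k)`. -/
theorem flag_corollary_two
    {d : ℕ} (hd : 1 ≤ d) (T : ℕ) (hT : 1 ≤ T)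
    (C : Set (EuclideanSpace ℝ (Fin d)))
    (hCconv : Convex ℝ C) (hCclosed : IsClosed C)
    (D L δ : ℝ) (hL : 0 < L) (hδ : 0 < δ) (hD0 : 0 ≤ D)
    (hD : ∀ a ∈ C, ∀ b ∈ C, ∀ i : Fin d, (a i - b i) ^ 2 ≤ D)
    (f h : EuclideanSpace ℝ (Fin d) → ℝ)
    (f' : EuclideanSpace ℝ (Fin d) → EuclideanSpace ℝ (Fin d))
    (hfconv : ConvexOn ℝ Set.univ f) (hhconv : ConvexOn ℝ Set.univ h)
    (hfdiff : ∀ v, HasGradientAt f (f' v) v)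
    (hflip : ∀ a ∈ C, ∀ b ∈ C, ‖f' a - f' b‖ ≤ L * ‖a - b‖)
    (F : EuclideanSpace ℝ (Fin d) → ℝ) (hF : ∀ v, F v = f v + h v)
    (x y z p g : ℕ → EuclideanSpace ℝ (Fin d))
    (s : ℕ → Fin d → ℝ) (Lk η : ℕ → ℝ)
    (hinit : x 1 = y 1 ∧ y 1 = z 1)
    (hxC : ∀ k, 1 ≤ k → k ≤ T → x k ∈ C)
    -- `y (k+1) = prox (x k)`: it is the minimizer over `C` of the prox objective at `x k`
    (hproxstep : ∀ k, 1 ≤ k → k ≤ T → y (k + 1) ∈ C ∧ ∀ w ∈ C,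
      h (y (k + 1)) + ⟪f' (x k), y (k + 1) - x k⟫ + L / 2 * ‖y (k + 1) - x k‖ ^ 2
        ≤ h w + ⟪f' (x k), w - x k⟫ + L / 2 * ‖w - x k‖ ^ 2)
    (hp : ∀ k, 1 ≤ k → k ≤ T → p k = -L • (y (k + 1) - x k))
    (hpne : ∀ k, 1 ≤ k → k ≤ T → p k ≠ 0)
    (hg : ∀ k, 1 ≤ k → k ≤ T → g k = ‖p k‖⁻¹ • p k)
    (hs : ∀ k, 1 ≤ k → k ≤ T → ∀ i : Fin d,
      s k i = Real.sqrt (∑ j ∈ Finset.Icc 1 k, g j i ^ 2))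
    -- `L_k = L · g_kᵀ S_k⁻¹ g_k` with `S_k = diag(s_k) + δ I`
    (hLk : ∀ k, 1 ≤ k → k ≤ T → Lk k = L * ∑ i : Fin d, g k i ^ 2 / (s k i + δ))
    (hη1 : η 1 = 1 / Lk 1)
    (hηk : ∀ k, 2 ≤ k → k ≤ T →
      η k = 1 / (2 * Lk k)
        + Real.sqrt (1 / (4 * Lk k ^ 2) + η (k - 1) ^ 2 * Lk (k - 1) / Lk k))
    -- mirror-descent step: `z (k+1)` minimizes `⟨η_k p_k, z − z_k⟩ + ½‖z − z_k‖²_{S_k}`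
    (hmirror : ∀ k, 1 ≤ k → k ≤ T → z (k + 1) ∈ C ∧ ∀ w ∈ C,
      ⟪η k • p k, z (k + 1) - z k⟫
          + 1 / 2 * ∑ i : Fin d, (s k i + δ) * (z (k + 1) i - z k i) ^ 2
        ≤ ⟪η k • p k, w - z k⟫
          + 1 / 2 * ∑ i : Fin d, (s k i + δ) * (w i - z k i) ^ 2)
    -- binary-search guarantee
    (hbs : ∀ k, 1 ≤ k → k ≤ T →
      ⟪p k, x k - z k⟫
        ≤ (η k * Lk k - 1) * ⟪p k, y k - x k⟫
          + D * L * (η k * Lk k) / (T : ℝ) ^ 3)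
    (u : EuclideanSpace ℝ (Fin d)) (hu : u ∈ C) :
    F (y (T + 1)) - F u
      ≤ L * D / (T : ℝ) ^ 2
        + D * ((∑ i : Fin d, s T i) + δ * d) / (2 * ∑ k ∈ Finset.Icc 1 T, η k) :=
  flag_corollary_two_general T hT C hCconv D L δ hL hδ hD0 hD f h f' hfconv hhconv hfdiff hflip F hF
    x y z p g s Lk η hinit hxC hproxstep hp hpne hg hs hLk hη1 hηk hmirror hbs u hu
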